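/- Let M ≥ 1 and let δ : ℤ → ℝ be a sequence with δ n > 0 for all n that satisfies the quasisymmetric shear condition with constant M. Then for every x ∈ ℝ and every t > 5, 1/(3M³) ≤ (h_δ(x+t) − h_δ(x))/(h_δ(x) − h_δ(x−t)) ≤ 3M³. -/

import Mathlib

/-!
`h_δ` interpolates `Hmap δ` linearly between consecutive integers, so each of the two increments
of `h_δ` over `[x, x + t]` and `[x - t, x]` is squeezed between increments of `Hmap δ` over
integer blocks. For `t > 5` the block on one side of the centre is at most twice as long as the
block on the other side; one application of the shear condition compares adjacent blocks of equal
length, a second one covers the overhang, and the ratio is at most `M + M² ≤ 3M³`.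
-/

/-- `Hmap δ n` is the value at the integer `n` of the developing map:
`H 0 = 0`, `H (n+1) = H n + δ n`. -/
noncomputable def Hmap (δ : ℤ → ℝ) (n : ℤ) : ℝ :=
  if 0 ≤ n then ∑ j ∈ Finset.range n.toNat, δ j
  else -∑ j ∈ Finset.range (-n).toNat, δ (n + j)

/-- The piecewise linear developing map associated to the sequence `δ`. -/
noncomputable def hdev (δ : ℤ → ℝ) (x : ℝ) : ℝ :=
  Hmap δ ⌊x⌋ + δ ⌊x⌋ * (x - (⌊x⌋ : ℝ))

/-- The quasisymmetric shear condition with constant `M` for a positive sequence `δ`: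
`1/M ≤ (δ m + ⋯ + δ (m+k)) / (δ (m-1) + ⋯ + δ (m-k-1)) ≤ M`. -/
def ShearQS (δ : ℤ → ℝ) (M : ℝ) : Prop :=
  ∀ (m : ℤ) (k : ℕ),
    1 / M ≤ (∑ i ∈ Finset.range (k + 1), δ (m + (i : ℤ))) /
        (∑ i ∈ Finset.range (k + 1), δ (m - 1 - (i : ℤ))) ∧
      (∑ i ∈ Finset.range (k + 1), δ (m + (i : ℤ))) /
        (∑ i ∈ Finset.range (k + 1), δ (m - 1 - (i : ℤ))) ≤ M

/-- The `M`-quasisymmetry condition for a map `h : ℝ → ℝ`. -/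
def QSCond (h : ℝ → ℝ) (M : ℝ) : Prop :=
  ∀ (x t : ℝ), 0 < t →
    1 / M ≤ (h (x + t) - h x) / (h x - h (x - t)) ∧
      (h (x + t) - h x) / (h x - h (x - t)) ≤ M

open Finset

theorem floor_spacing_of_five_lt (x : ℝ) {t : ℝ} (ht : 5 < t) :
    ⌊x - t⌋ + 5 ≤ ⌊x⌋ ∧ ⌊x⌋ + 5 ≤ ⌊x + t⌋ ∧
      2 * ⌊x⌋ - 1 ≤ ⌊x + t⌋ + ⌊x - t⌋ ∧ ⌊x + t⌋ + ⌊x - t⌋ ≤ 2 * ⌊x⌋ + 1 := by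
  have le_of_lt_add_one (p q : ℤ) (h : (p : ℝ) < q + 1) : p ≤ q :=
    Int.lt_add_one_iff.1 (by exact_mod_cast h)
  have := Int.floor_le x
  have := Int.lt_floor_add_one x
  have := Int.floor_le (x + t)
  have := Int.lt_floor_add_one (x + t)
  have := Int.floor_le (x - t)
  have := Int.lt_floor_add_one (x - t)
  refine ⟨le_of_lt_add_one _ _ ?_, le_of_lt_add_one _ _ ?_, le_of_lt_add_one _ _ ?_,
    le_of_lt_add_one _ _ ?_⟩ <;> push_cast <;> linarith

theorem le_div_and_div_le_of_le_mul {N D C : ℝ} (hD : 0 < D) (hN : 0 < N)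
    (hND : N ≤ C * D) (hDN : D ≤ C * N) : 1 / C ≤ N / D ∧ N / D ≤ C := by
  have hC : 0 < C := pos_of_mul_pos_left (hN.trans_le hND) hD.le
  refine ⟨?_, (div_le_iff₀ hD).2 hND⟩
  rw [div_le_div_iff₀ hC hD, one_mul]
  linarith

theorem Hmap_succ (δ : ℤ → ℝ) (n : ℤ) : Hmap δ (n + 1) = Hmap δ n + δ n := by
  unfold Hmap
  split_ifs with hn₁ hn
  · rw [show (n + 1).toNat = n.toNat + 1 by omega, sum_range_succ, Int.toNat_of_nonneg hn]
  · obtain rfl : n = -1 := by omega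
    simp
  · omega
  · rw [show (-n).toNat = (-(n + 1)).toNat + 1 by omega, sum_range_succ']
    simp only [Nat.cast_add, Nat.cast_one, Nat.cast_zero, add_zero, neg_add, ← add_assoc,
      add_right_comm n _ 1]
    ring

theorem Hmap_add_natCast_sub (δ : ℤ → ℝ) (m : ℤ) (k : ℕ) :
    Hmap δ (m + k) - Hmap δ m = ∑ i ∈ range k, δ (m + i) := by
  induction k with
  | zero => simp
  | succ k ih =>
    rw [Nat.cast_succ, ← add_assoc, Hmap_succ, sum_range_succ, ← ih]
    ring

theorem Hmap_sub_Hmap_sub_natCast (δ : ℤ → ℝ) (m : ℤ) (k : ℕ) :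
    Hmap δ m - Hmap δ (m - k) = ∑ i ∈ range k, δ (m - 1 - i) := by
  induction k with
  | zero => simp
  | succ k ih =>
    have hstep := Hmap_succ δ (m - 1 - k)
    rw [show m - 1 - (k : ℤ) + 1 = m - k by ring] at hstep
    rw [sum_range_succ, ← ih, Nat.cast_succ, show m - (k + 1 : ℤ) = m - 1 - k by ring]
    linarith

section Increments

variable {δ : ℤ → ℝ} (hpos : ∀ n, 0 < δ n)
include hpos

theorem Hmap_strictMono : StrictMono (Hmap δ) :=
  strictMono_int_of_lt_succ fun n => by
    rw [Hmap_succ]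
    linarith [hpos n]

theorem Hmap_floor_le_hdev (y : ℝ) : Hmap δ ⌊y⌋ ≤ hdev δ y :=
  le_add_of_nonneg_right (mul_nonneg (hpos _).le (Int.fract_nonneg y))

theorem hdev_le_Hmap_floor_add_one (y : ℝ) : hdev δ y ≤ Hmap δ (⌊y⌋ + 1) := by
  rw [Hmap_succ]
  exact add_le_add_right (mul_le_of_le_one_right (hpos _).le (Int.fract_lt_one y).le) _

theorem hdev_sub_le_Hmap_sub (y z : ℝ) :
    hdev δ z - hdev δ y ≤ Hmap δ (⌊z⌋ + 1) - Hmap δ ⌊y⌋ := by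
  linarith [Hmap_floor_le_hdev hpos y, hdev_le_Hmap_floor_add_one hpos z]

theorem Hmap_sub_le_hdev_sub (y z : ℝ) :
    Hmap δ ⌊z⌋ - Hmap δ (⌊y⌋ + 1) ≤ hdev δ z - hdev δ y := by
  linarith [Hmap_floor_le_hdev hpos z, hdev_le_Hmap_floor_add_one hpos y]

variable {M : ℝ} (hshear : ShearQS δ M)
include hshear

theorem ShearQS.Hmap_add_sub_le (m : ℤ) {ℓ : ℤ} (hℓ : 0 < ℓ) :
    Hmap δ (m + ℓ) - Hmap δ m ≤ M * (Hmap δ m - Hmap δ (m - ℓ)) := by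
  obtain ⟨k, rfl⟩ : ∃ k : ℕ, ℓ = (k + 1 : ℕ) := ⟨(ℓ - 1).toNat, by omega⟩
  have h := (hshear m k).2
  rw [← Hmap_add_natCast_sub, ← Hmap_sub_Hmap_sub_natCast] at h
  have hleft := sub_pos.2 (Hmap_strictMono hpos (show m - ((k + 1 : ℕ) : ℤ) < m by omega))
  exact (div_le_iff₀ hleft).1 h

theorem ShearQS.Hmap_sub_sub_le (hM : 0 < M) (m : ℤ) {ℓ : ℤ} (hℓ : 0 < ℓ) :
    Hmap δ m - Hmap δ (m - ℓ) ≤ M * (Hmap δ (m + ℓ) - Hmap δ m) := by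
  obtain ⟨k, rfl⟩ : ∃ k : ℕ, ℓ = (k + 1 : ℕ) := ⟨(ℓ - 1).toNat, by omega⟩
  have h := (hshear m k).1
  rw [← Hmap_add_natCast_sub, ← Hmap_sub_Hmap_sub_natCast] at h
  have hleft := sub_pos.2 (Hmap_strictMono hpos (show m - ((k + 1 : ℕ) : ℤ) < m by omega))
  rw [div_le_div_iff₀ hM hleft] at h
  linarith

theorem ShearQS.Hmap_sub_le_of_le_two_mul (hM : 0 ≤ M) {u v w : ℤ} (hwu : w < u)
    (hvu : v - u ≤ 2 * (u - w)) :
    Hmap δ v - Hmap δ u ≤ M * (1 + M) * (Hmap δ u - Hmap δ w) := by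
  set ℓ := u - w
  have hℓ : 0 < ℓ := by omega
  have hfar := hshear.Hmap_add_sub_le hpos (u + ℓ) hℓ
  have hnear := hshear.Hmap_add_sub_le hpos u hℓ
  rw [add_sub_cancel_right] at hfar
  rw [show u - ℓ = w by omega] at hnear
  have hv : Hmap δ v ≤ Hmap δ (u + ℓ + ℓ) := (Hmap_strictMono hpos).monotone (by omega)
  calc Hmap δ v - Hmap δ u
      ≤ (Hmap δ (u + ℓ + ℓ) - Hmap δ (u + ℓ)) + (Hmap δ (u + ℓ) - Hmap δ u) := by linarith
    _ ≤ (1 + M) * (Hmap δ (u + ℓ) - Hmap δ u) := by linarith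
    _ ≤ (1 + M) * (M * (Hmap δ u - Hmap δ w)) := by gcongr
    _ = M * (1 + M) * (Hmap δ u - Hmap δ w) := by ring

theorem ShearQS.Hmap_sub_le_of_le_two_mul' (hM : 0 < M) {u v w : ℤ} (huw : u < w)
    (huv : u - v ≤ 2 * (w - u)) :
    Hmap δ u - Hmap δ v ≤ M * (1 + M) * (Hmap δ w - Hmap δ u) := by
  set ℓ := w - u
  have hℓ : 0 < ℓ := by omega
  have hfar := hshear.Hmap_sub_sub_le hpos hM (u - ℓ) hℓ
  have hnear := hshear.Hmap_sub_sub_le hpos hM u hℓ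
  rw [sub_add_cancel] at hfar
  rw [show u + ℓ = w by omega] at hnear
  have hv : Hmap δ (u - ℓ - ℓ) ≤ Hmap δ v := (Hmap_strictMono hpos).monotone (by omega)
  calc Hmap δ u - Hmap δ v
      ≤ (Hmap δ u - Hmap δ (u - ℓ)) + (Hmap δ (u - ℓ) - Hmap δ (u - ℓ - ℓ)) := by linarith
    _ ≤ (1 + M) * (Hmap δ u - Hmap δ (u - ℓ)) := by linarith
    _ ≤ (1 + M) * (M * (Hmap δ w - Hmap δ u)) := by gcongr
    _ = M * (1 + M) * (Hmap δ w - Hmap δ u) := by ring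

end Increments

theorem large_scale_quasisymmetry (M : ℝ) (hM : 1 ≤ M) (δ : ℤ → ℝ)
    (hpos : ∀ n, 0 < δ n) (hshear : ShearQS δ M) :
    ∀ (x t : ℝ), 5 < t →
      1 / (3 * M ^ 3) ≤ (hdev δ (x + t) - hdev δ x) / (hdev δ x - hdev δ (x - t)) ∧
        (hdev δ (x + t) - hdev δ x) / (hdev δ x - hdev δ (x - t)) ≤ 3 * M ^ 3 := by
  intro x t ht
  obtain ⟨hb, ha, hab, hab'⟩ := floor_spacing_of_five_lt x ht
  have hM0 : 0 < M := by linarith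
  have hup := hshear.Hmap_sub_le_of_le_two_mul hpos hM0.le
    (u := ⌊x⌋) (v := ⌊x + t⌋ + 1) (w := ⌊x - t⌋ + 1) (by omega) (by omega)
  have hdown := hshear.Hmap_sub_le_of_le_two_mul' hpos hM0
    (u := ⌊x⌋ + 1) (v := ⌊x - t⌋) (w := ⌊x + t⌋) (by omega) (by omega)
  have hD_ge := Hmap_sub_le_hdev_sub hpos (x - t) x
  have hN_ge := Hmap_sub_le_hdev_sub hpos x (x + t)
  have hD_gap := sub_pos.2 (Hmap_strictMono hpos (show ⌊x - t⌋ + 1 < ⌊x⌋ by omega))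
  have hN_gap := sub_pos.2 (Hmap_strictMono hpos (show ⌊x⌋ + 1 < ⌊x + t⌋ by omega))
  have hC : M * (1 + M) ≤ 3 * M ^ 3 := by
    nlinarith [mul_nonneg (mul_nonneg hM0.le (sub_nonneg.2 hM)) hM0.le]
  apply le_div_and_div_le_of_le_mul (hD_gap.trans_le hD_ge) (hN_gap.trans_le hN_ge)
  · calc _ ≤ Hmap δ (⌊x + t⌋ + 1) - Hmap δ ⌊x⌋ := hdev_sub_le_Hmap_sub hpos x (x + t)
      _ ≤ M * (1 + M) * (Hmap δ ⌊x⌋ - Hmap δ (⌊x - t⌋ + 1)) := hup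
      _ ≤ 3 * M ^ 3 * (hdev δ x - hdev δ (x - t)) := by gcongr
  · calc _ ≤ Hmap δ (⌊x⌋ + 1) - Hmap δ ⌊x - t⌋ := hdev_sub_le_Hmap_sub hpos (x - t) x
      _ ≤ M * (1 + M) * (Hmap δ ⌊x + t⌋ - Hmap δ (⌊x⌋ + 1)) := hdown
      _ ≤ 3 * M ^ 3 * (hdev δ (x + t) - hdev δ x) := by gcongr
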